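/- Off-diagonal trace sums for K: with K_{m+1} as in the linear-detrending setting and for 1 ≤ j < m, the j-th superdiagonal sum α_j^{(m)} := ∑_{r=2}^{m+1−j} [K_{m+1}]_{r,r+j} satisfies α_j^{(m)} = [(m−j)(m+1−j)(m+2−j) / (m(m+1)(m+2))] · [ (m²+2m−3)/15 − (j² + 3j(m+1))/10 ]. -/

import Mathlib

/-!
Inverting the 2 × 2 Gram matrix of the design gives a closed form for every entry of `K`;
along the `j`-th superdiagonal, with `x = m + 1 - j`, it becomes `a · r(x - r) - b · (r(x - r))²`
for constants `a`, `b`. The sums of `r(x - r)` and of its square over `r < x` are polynomials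
in `x` (proved for a free real `x` by induction on the number of terms), and substituting them
gives the result.
-/

open Matrix

/-- The lower-triangular matrix of ones, `J_{r,s} = 1` iff `s ≤ r` (indices `1,…,m+1`). -/
def Jones (m : ℕ) : Matrix (Fin (m + 1)) (Fin (m + 1)) ℝ :=
  fun r s => if s ≤ r then 1 else 0

/-- The `(m+1) × 2` design matrix with rows `(1, t)` for `t = 1, …, m+1`. -/
def linDesign (m : ℕ) : Matrix (Fin (m + 1)) (Fin 2) ℝ :=
  fun t j => ((t : ℝ) + 1) ^ (j : ℕ)

/-- `Q_{m+1} = I − D(DᵀD)⁻¹Dᵀ` for the linear-fit design matrix. -/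
noncomputable def Qlin (m : ℕ) : Matrix (Fin (m + 1)) (Fin (m + 1)) ℝ :=
  1 - linDesign m * ((linDesign m)ᵀ * linDesign m)⁻¹ * (linDesign m)ᵀ

/-- `K_{m+1} := Jᵀ Q_{m+1} J`. -/
noncomputable def Kmat (m : ℕ) : Matrix (Fin (m + 1)) (Fin (m + 1)) ℝ :=
  (Jones m)ᵀ * Qlin m * Jones m

open Finset

lemma sum_range_cast_add_one (n : ℕ) : ∑ t ∈ range n, ((t : ℝ) + 1) = n * (n + 1) / 2 := by
  induction n with
  | zero => simp
  | succ n ih => rw [sum_range_succ, ih]; push_cast; ring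

lemma sum_range_cast_add_one_sq (n : ℕ) :
    ∑ t ∈ range n, ((t : ℝ) + 1) ^ 2 = (n : ℝ) * (n + 1) * (2 * n + 1) / 6 := by
  induction n with
  | zero => simp
  | succ n ih => rw [sum_range_succ, ih]; push_cast; ring

lemma sum_range_mul_sub (x : ℝ) (n : ℕ) :
    ∑ r ∈ range n, (r : ℝ) * (x - r) = n * (n - 1) * (3 * x - 2 * n + 1) / 6 := by
  induction n with
  | zero => simp
  | succ n ih => rw [sum_range_succ, ih]; push_cast; ring

lemma sum_range_mul_sub_sq (x : ℝ) (n : ℕ) :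
    ∑ r ∈ range n, ((r : ℝ) * (x - r)) ^ 2 =
      n * (n - 1) * (5 * (2 * n - 1) * x ^ 2 - 15 * n * (n - 1) * x
        + (2 * n - 1) * (3 * n ^ 2 - 3 * n - 1)) / 30 := by
  induction n with
  | zero => simp
  | succ n ih => rw [sum_range_succ, ih]; push_cast; ring

lemma sum_fin_ite_le (f : ℕ → ℝ) {m r : ℕ} (hr : r ≤ m + 1) :
    ∑ t : Fin (m + 1), (if r ≤ (t : ℕ) then f t else 0) =
      ∑ t ∈ range (m + 1), f t - ∑ t ∈ range r, f t := by
  rw [Fin.sum_univ_eq_sum_range (fun t => if r ≤ t then f t else 0), ← sum_filter,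
    ← sum_Ico_eq_sub _ hr]
  congr 1
  ext t
  simp only [mem_filter, mem_range, mem_Ico]
  omega

section

variable {m : ℕ}

lemma Jones_transpose_mul_Jones_apply (r s : Fin (m + 1)) :
    ((Jones m)ᵀ * Jones m) r s = m + 1 - max (r : ℝ) s := by
  have hcount := sum_fin_ite_le (fun _ => 1) (max r s).is_lt.le
  simp only [mul_apply, transpose_apply, Jones, ite_zero_mul_ite_zero, mul_one, Fin.le_def,
    ← max_le_iff, ← Fin.coe_max, hcount]
  simp

lemma Jones_transpose_mul_linDesign_apply_zero (r : Fin (m + 1)) :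
    ((Jones m)ᵀ * linDesign m) r 0 = m + 1 - r := by
  have hcount := sum_fin_ite_le (fun _ => 1) r.is_lt.le
  rw [mul_apply]
  simp only [transpose_apply, Jones, linDesign, Fin.val_zero, pow_zero, mul_one, Fin.le_def]
  rw [hcount]
  simp

lemma Jones_transpose_mul_linDesign_apply_one (r : Fin (m + 1)) :
    ((Jones m)ᵀ * linDesign m) r 1 = ((m + 1) * (m + 2) - r * (r + 1)) / 2 := by
  have hsum := sum_fin_ite_le (fun t => (t : ℝ) + 1) r.is_lt.le
  rw [mul_apply]
  simp only [transpose_apply, Jones, linDesign, Fin.val_one, pow_one, ite_mul, one_mul, zero_mul,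
    Fin.le_def]
  rw [hsum, sum_range_cast_add_one, sum_range_cast_add_one]
  push_cast
  ring

lemma linDesign_gram :
    (linDesign m)ᵀ * linDesign m =
      !![(m : ℝ) + 1, (m + 1) * (m + 2) / 2;
        (m + 1) * (m + 2) / 2, (m + 1) * (m + 2) * (2 * m + 3) / 6] := by
  have h1 : ∑ t : Fin (m + 1), ((t : ℝ) + 1) = (m + 1) * (m + 2) / 2 := by
    rw [Fin.sum_univ_eq_sum_range (fun t => (t : ℝ) + 1), sum_range_cast_add_one]
    push_cast; ring
  have h2 :
      ∑ t : Fin (m + 1), ((t : ℝ) + 1) ^ 2 = ((m : ℝ) + 1) * (m + 2) * (2 * m + 3) / 6 := by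
    rw [Fin.sum_univ_eq_sum_range (fun t => ((t : ℝ) + 1) ^ 2), sum_range_cast_add_one_sq]
    push_cast; ring
  ext i j
  fin_cases i <;> fin_cases j <;> simp [mul_apply, linDesign, ← sq, h1, h2]

lemma linDesign_gram_inv (hm : 0 < m) :
    ((linDesign m)ᵀ * linDesign m)⁻¹ =
      (12 / (m * (m + 1) ^ 2 * (m + 2)) : ℝ) •
        !![((m : ℝ) + 1) * (m + 2) * (2 * m + 3) / 6, -((m + 1) * (m + 2) / 2);
          -((m + 1) * (m + 2) / 2), m + 1] := by
  have : (m : ℝ) ≠ 0 := by positivity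
  apply inv_eq_right_inv
  rw [linDesign_gram]
  ext i j
  fin_cases i <;> fin_cases j <;>
    simp only [smul_of, smul_cons, smul_eq_mul, mul_neg, Matrix.smul_empty, Fin.isValue,
      Fin.zero_eta, Fin.mk_one, mul_apply, of_apply, cons_val', cons_val_fin_one, cons_val_zero,
      cons_val_one, Fin.sum_univ_two, one_apply, zero_ne_one, one_ne_zero, ↓reduceIte] <;>
    field_simp <;> ring

lemma Kmat_eq :
    Kmat m = (Jones m)ᵀ * Jones m -
      (Jones m)ᵀ * linDesign m * ((linDesign m)ᵀ * linDesign m)⁻¹ *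
        ((Jones m)ᵀ * linDesign m)ᵀ := by
  rw [Kmat, Qlin, transpose_mul, transpose_transpose]
  simp only [Matrix.mul_sub, Matrix.sub_mul, Matrix.mul_one, Matrix.mul_assoc]

/-- Indices are 0-based: this is the formula for `[K_{m+1}]_{r+1,s+1}`, with
`m² + 2m + 3rs` split as `(m² + 2m) + 3rs`. -/
theorem Kmat_apply (hm : 0 < m) (r s : Fin (m + 1)) :
    Kmat m r s = m + 1 - max (r : ℝ) s - (m + 1 - r) * (m + 1 - s) / (m + 1)
      - 3 * (r * (m + 1 - r)) * (s * (m + 1 - s)) / (m * (m + 1) * (m + 2)) := by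
  have : (m : ℝ) ≠ 0 := by positivity
  have h0 := Jones_transpose_mul_linDesign_apply_zero (m := m)
  have h1 := Jones_transpose_mul_linDesign_apply_one (m := m)
  rw [Kmat_eq, Matrix.sub_apply, Jones_transpose_mul_Jones_apply, linDesign_gram_inv hm]
  generalize (Jones m)ᵀ * linDesign m = B at h0 h1
  simp only [smul_of, smul_cons, smul_eq_mul, mul_neg, Matrix.smul_empty, mul_apply, of_apply,
    cons_val', cons_val_fin_one, Fin.sum_univ_two, Fin.isValue, h0, cons_val_zero, h1, cons_val_one,
    transpose_apply]
  field_simp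
  ring

-- With `x = m + 1 - j`, `(r + j)(m + 1 - r) = r(x - r) + j(m + 1)`.
lemma Kmat_apply_add (hm : 0 < m) (r : Fin (m + 1)) (j : ℕ) (h : (r : ℕ) + j < m + 1) :
    Kmat m r ⟨r + j, h⟩ =
      (1 / (m + 1) - 3 * j / (m * (m + 2))) * (r * (m + 1 - j - r))
        - 3 / (m * (m + 1) * (m + 2)) * (r * (m + 1 - j - r)) ^ 2 := by
  have : (m : ℝ) ≠ 0 := by positivity
  rw [Kmat_apply hm]
  simp only [Nat.cast_add]
  rw [max_eq_right (by linarith)]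
  field_simp
  ring

lemma sum_fin_ite_superdiag (f : ℕ → ℝ) (hf : f 0 = 0) {j : ℕ} :
    ∑ r : Fin (m + 1), (if 1 ≤ (r : ℕ) ∧ (r : ℕ) + j ≤ m then f r else 0) =
      ∑ r ∈ range (m - j + 1), f r := by
  rw [Fin.sum_univ_eq_sum_range (fun r => if 1 ≤ r ∧ r + j ≤ m then f r else 0),
    ← sum_filter]
  apply sum_subset
  · intro r
    simp only [mem_filter, mem_range]
    omega
  · intro r hr hr'
    simp only [mem_filter, mem_range] at hr hr'
    obtain rfl : r = 0 := by omega
    exact hf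

end

theorem Kmat_superdiagonal_sum (m j : ℕ) (hjm : j < m) :
    (∑ r : Fin (m + 1),
        if h : 1 ≤ r.val ∧ r.val + j ≤ m then Kmat m r ⟨r.val + j, by omega⟩ else 0)
      = (((m : ℝ) - j) * ((m : ℝ) + 1 - j) * ((m : ℝ) + 2 - j) /
            ((m : ℝ) * ((m : ℝ) + 1) * ((m : ℝ) + 2))) *
          (((m : ℝ) ^ 2 + 2 * m - 3) / 15 - ((j : ℝ) ^ 2 + 3 * j * ((m : ℝ) + 1)) / 10) := by
  have hm : 0 < m := by omega
  have : (m : ℝ) ≠ 0 := by positivity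
  set a : ℝ := 1 / (m + 1) - 3 * j / (m * (m + 2))
  set b : ℝ := 3 / (m * (m + 1) * (m + 2))
  set x : ℝ := m + 1 - j
  calc _ = ∑ r : Fin (m + 1), if 1 ≤ (r : ℕ) ∧ (r : ℕ) + j ≤ m
          then a * (r * (x - r)) - b * (r * (x - r)) ^ 2 else 0 := by
        refine sum_congr rfl fun r _ => ?_
        split_ifs
        · rw [Kmat_apply_add hm]
        · rfl
    _ = a * ∑ r ∈ range (m - j + 1), (r : ℝ) * (x - r)
          - b * ∑ r ∈ range (m - j + 1), ((r : ℝ) * (x - r)) ^ 2 := by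
        rw [sum_fin_ite_superdiag (fun r : ℕ => a * (r * (x - r)) - b * (r * (x - r)) ^ 2)
          (by simp), sum_sub_distrib, mul_sum, mul_sum]
    _ = _ := by
        rw [sum_range_mul_sub, sum_range_mul_sub_sq]
        push_cast [hjm.le]
        simp only [a, b, x]
        field_simp
        ring
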